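/- arXiv:1601.00042 — 2 statements merged into one kernel-verified Lean document; each statement's English description precedes it below -/
import Mathlib

section
/- Fix T > 0 such that Φ_v(T) is invertible, write Φ = exp(T·A) and G(T) = Φ_v(T)·Φ_v(T)ᵀ, and let J̄ > 0. Then for all x₀, x_f ∈ ℝ⁶: (i) if (x_f − Φ·x₀)ᵀ·G(T)⁻¹·(x_f − Φ·x₀) ≤ J̄²/2, then J_T(x₀, x_f) ≤ J̄; and (ii) if J_T(x₀, x_f) ≤ J̄, then (x_f − Φ·x₀)ᵀ·G(T)⁻¹·(x_f − Φ·x₀) ≤ J̄². That is, for fixed maneuver duration the set of states reachable from x₀ with steering cost at most J̄ contains the ellipsoid {x_f : (x_f − Φx₀)ᵀ G(T)⁻¹ (x_f − Φx₀) ≤ J̄²/2} and is contained in the ellipsoid {x_f : (x_f − Φx₀)ᵀ G(T)⁻¹ (x_f − Φx₀) ≤ J̄²}. -/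
noncomputable section

/-- Euclidean norm of a finite real vector. -/
def enorm {m : ℕ} (v : Fin m → ℝ) : ℝ := Real.sqrt (∑ i, v i ^ 2)

/-- The CWH dynamics matrix. -/
def cwhA (ω : ℝ) : Matrix (Fin 6) (Fin 6) ℝ :=
  !![0, 0, 0, 1, 0, 0;
     0, 0, 0, 0, 1, 0;
     0, 0, 0, 0, 0, 1;
     3*ω^2, 0, 0, 0, 2*ω, 0;
     0, 0, 0, -2*ω, 0, 0;
     0, 0, -ω^2, 0, 0, 0]

/-- The CWH input matrix `B = [0; I₃]`. -/
def cwhB : Matrix (Fin 6) (Fin 3) ℝ :=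
  !![0, 0, 0;
     0, 0, 0;
     0, 0, 0;
     1, 0, 0;
     0, 1, 0;
     0, 0, 1]

/-- State transition matrix `exp(t A)`. -/
def expm (ω t : ℝ) : Matrix (Fin 6) (Fin 6) ℝ := NormedSpace.exp (t • cwhA ω)

/-- Horizontal concatenation of two `6 × 3` blocks into a `6 × 6` matrix. -/
def blockCat (M N : Matrix (Fin 6) (Fin 3) ℝ) : Matrix (Fin 6) (Fin 6) ℝ :=
  Matrix.of fun i j => if h : (j : ℕ) < 3 then M i ⟨j, h⟩ else N i ⟨(j : ℕ) - 3, by omega⟩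

/-- The aggregated impulse matrix `Φ_v(T) = [exp(T A) B  B]`. -/
def Phiv (ω T : ℝ) : Matrix (Fin 6) (Fin 6) ℝ := blockCat (expm ω T * cwhB) cwhB

/-- The two-impulse Gramian `G(T) = Φ_v(T) Φ_v(T)ᵀ`. -/
def gram (ω T : ℝ) : Matrix (Fin 6) (Fin 6) ℝ := Phiv ω T * (Phiv ω T).transpose

/-- First three components of a 6-vector. -/
def first3 (v : Fin 6 → ℝ) : Fin 3 → ℝ := fun i => v ⟨(i : ℕ), by omega⟩

/-- Last three components of a 6-vector. -/
def last3 (v : Fin 6 → ℝ) : Fin 3 → ℝ := fun i => v ⟨(i : ℕ) + 3, by omega⟩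

/-- The stacked two-impulse steering solution. -/
def dVsteer (ω T : ℝ) (x₀ xf : Fin 6 → ℝ) : Fin 6 → ℝ :=
  (Phiv ω T)⁻¹.mulVec (xf - (expm ω T).mulVec x₀)

/-- The fixed-duration two-impulse steering cost `J_T(x₀, x_f)`. -/
def Jfix (ω T : ℝ) (x₀ xf : Fin 6 → ℝ) : ℝ :=
  _root_.enorm (first3 (dVsteer ω T x₀ xf)) + _root_.enorm (last3 (dVsteer ω T x₀ xf))

/-- Euclidean operator norm of a `6 × 6` real matrix. -/
def opNorm (M : Matrix (Fin 6) (Fin 6) ℝ) : ℝ :=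
  ‖(Matrix.toEuclideanCLM (𝕜 := ℝ) M : EuclideanSpace ℝ (Fin 6) →L[ℝ] EuclideanSpace ℝ (Fin 6))‖

/-!
Since `G(T)⁻¹ = Φ_v(T)⁻ᵀ Φ_v(T)⁻¹`, the quadratic form `(x_f − Φ x₀)ᵀ G(T)⁻¹ (x_f − Φ x₀)` is
`‖ΔV‖² = ‖ΔV₁‖² + ‖ΔV₂‖²`, while `J_T = ‖ΔV₁‖ + ‖ΔV₂‖`. Both bounds are then the elementary
inequalities `(a + b)² / 2 ≤ a² + b² ≤ (a + b)²` for `a, b ≥ 0`.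
-/

open scoped Matrix

theorem dotProduct_mulVec_inv_mul_transpose {n R : Type*} [Fintype n] [DecidableEq n]
    [CommRing R] (P : Matrix n n R) (y : n → R) :
    y ⬝ᵥ ((P * Pᵀ)⁻¹ *ᵥ y) = (P⁻¹ *ᵥ y) ⬝ᵥ (P⁻¹ *ᵥ y) := by
  rw [Matrix.mul_inv_rev, ← Matrix.transpose_nonsing_inv, ← Matrix.mulVec_mulVec,
    Matrix.dotProduct_mulVec, Matrix.vecMul_transpose]

theorem enorm_sq {m : ℕ} (v : Fin m → ℝ) : _root_.enorm v ^ 2 = v ⬝ᵥ v := by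
  rw [_root_.enorm, Real.sq_sqrt (by positivity)]
  simp only [dotProduct, sq]

theorem dotProduct_self_eq_first3_add_last3 (v : Fin 6 → ℝ) :
    v ⬝ᵥ v = first3 v ⬝ᵥ first3 v + last3 v ⬝ᵥ last3 v := by
  simp only [dotProduct, Fin.sum_univ_six, Fin.sum_univ_three, first3, last3]
  ring_nf
  rfl

theorem dotProduct_gram_inv_mulVec_eq (ω T : ℝ) (x₀ xf : Fin 6 → ℝ) :
    (xf - expm ω T *ᵥ x₀) ⬝ᵥ ((gram ω T)⁻¹ *ᵥ (xf - expm ω T *ᵥ x₀)) =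
      _root_.enorm (first3 (dVsteer ω T x₀ xf)) ^ 2 +
        _root_.enorm (last3 (dVsteer ω T x₀ xf)) ^ 2 := by
  rw [gram, dotProduct_mulVec_inv_mul_transpose, enorm_sq, enorm_sq,
    ← dotProduct_self_eq_first3_add_last3]
  rfl

section OrderedField

variable {α : Type*} [Field α] [LinearOrder α] [IsStrictOrderedRing α] {a b c : α}

theorem add_le_of_sq_add_sq_le_half_sq (hc : 0 ≤ c) (h : a ^ 2 + b ^ 2 ≤ c ^ 2 / 2) :
    a + b ≤ c :=
  (abs_le_of_sq_le_sq' (by linarith [add_sq_le (a := a) (b := b)]) hc).2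

theorem sq_add_sq_le_sq_of_add_le (ha : 0 ≤ a) (hb : 0 ≤ b) (h : a + b ≤ c) :
    a ^ 2 + b ^ 2 ≤ c ^ 2 :=
  calc a ^ 2 + b ^ 2 ≤ (a + b) ^ 2 := by nlinarith [mul_nonneg ha hb]
    _ ≤ c ^ 2 := pow_le_pow_left₀ (add_nonneg ha hb) h 2

end OrderedField

theorem reachability_ellipsoid_bounds_general (ω : ℝ) (T : ℝ) (Jbar : ℝ) (hJbar : 0 < Jbar) :
    ∀ x₀ xf : Fin 6 → ℝ,
      (dotProduct (xf - (expm ω T).mulVec x₀)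
          ((gram ω T)⁻¹.mulVec (xf - (expm ω T).mulVec x₀)) ≤ Jbar ^ 2 / 2 →
        Jfix ω T x₀ xf ≤ Jbar) ∧
      (Jfix ω T x₀ xf ≤ Jbar →
        dotProduct (xf - (expm ω T).mulVec x₀)
          ((gram ω T)⁻¹.mulVec (xf - (expm ω T).mulVec x₀)) ≤ Jbar ^ 2) := by
  intro x₀ xf
  rw [dotProduct_gram_inv_mulVec_eq]
  exact ⟨add_le_of_sq_add_sq_le_half_sq hJbar.le,
    sq_add_sq_le_sq_of_add_le (Real.sqrt_nonneg _) (Real.sqrt_nonneg _)⟩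

/-- **Ellipsoidal bounds on the fixed-duration fuel-reachability set.**
With `Φ = exp(T A)`, `G(T) = Φ_v(T) Φ_v(T)ᵀ` and `J̄ > 0`:
(i) `(x_f − Φ x₀)ᵀ G(T)⁻¹ (x_f − Φ x₀) ≤ J̄²/2` implies `J_T(x₀, x_f) ≤ J̄`; and
(ii) `J_T(x₀, x_f) ≤ J̄` implies `(x_f − Φ x₀)ᵀ G(T)⁻¹ (x_f − Φ x₀) ≤ J̄²`. -/
theorem reachability_ellipsoid_bounds (ω : ℝ) (hω : 0 < ω) (T : ℝ) (hT : 0 < T)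
    (hinv : IsUnit (Phiv ω T)) (Jbar : ℝ) (hJbar : 0 < Jbar) :
    ∀ x₀ xf : Fin 6 → ℝ,
      (dotProduct (xf - (expm ω T).mulVec x₀)
          ((gram ω T)⁻¹.mulVec (xf - (expm ω T).mulVec x₀)) ≤ Jbar ^ 2 / 2 →
        Jfix ω T x₀ xf ≤ Jbar) ∧
      (Jfix ω T x₀ xf ≤ Jbar →
        dotProduct (xf - (expm ω T).mulVec x₀)
          ((gram ω T)⁻¹.mulVec (xf - (expm ω T).mulVec x₀)) ≤ Jbar ^ 2) :=
  reachability_ellipsoid_bounds_general ω T Jbar hJbar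

end
end

section
/- Let t_init ∈ ℝ, let τ₁ ≤ … ≤ τ_N be burn times, let x_init ∈ ℝ⁶ and ΔVᵢ ∈ ℝ³ for i = 1, …, N, and define x(t) = exp((t − t_init)·A)·x_init + Σ_{i : τᵢ ≤ t} exp((t − τᵢ)·A)·B·ΔVᵢ. Then at every time t ∉ {τ₁, …, τ_N}, the function x is differentiable with derivative x′(t) = A·x(t); that is, the impulsive solution formula satisfies the CWH coasting dynamics ẋ = A·x away from the burn times. -/
noncomputable section

open scoped Classical in
/-- The impulsive CWH trajectory from `x₀` at time `t₀` with burns `V i` at times `τ i`: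
`x(t) = exp((t − t₀) A) x₀ + Σ_{i : τ i ≤ t} exp((t − τ i) A) B (V i)`. -/
def impulsiveTraj (ω t₀ : ℝ) (x₀ : Fin 6 → ℝ) {N : ℕ} (τ : Fin N → ℝ)
    (V : Fin N → Fin 3 → ℝ) (t : ℝ) : Fin 6 → ℝ :=
  (expm ω (t - t₀)).mulVec x₀ +
    ∑ i ∈ Finset.univ.filter (fun i => τ i ≤ t),
      (expm ω (t - τ i)).mulVec (cwhB.mulVec (V i))

/-! The burns contribute only through the set `{i | τ i ≤ t}`, which is locally constant in `t`
away from the burn times. Near such a `t` the trajectory is therefore a fixed finite sum of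
terms `exp((t - c) A) w`, each of which solves `ẋ = A x`. -/

-- Any norm gives the same derivatives; this one makes square matrices a complete normed algebra.
attribute [local instance] Matrix.linftyOpNormedAddCommGroup Matrix.linftyOpNormedSpace
  Matrix.linftyOpNormedRing Matrix.linftyOpNormedAlgebra

open Filter Topology Matrix

theorem eventually_le_iff_le_of_ne {α : Type*} [LinearOrder α] [TopologicalSpace α]
    [OrderTopology α] {a t : α} (h : t ≠ a) : ∀ᶠ s in 𝓝 t, (a ≤ s ↔ a ≤ t) := by
  rcases h.lt_or_gt with h | h
  · filter_upwards [eventually_lt_nhds h] with s hs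
    simp [not_le.mpr hs, not_le.mpr h]
  · filter_upwards [eventually_gt_nhds h] with s hs
    simp [hs.le, h.le]

section

variable {m n : Type*} [Fintype m] [Fintype n]

theorem HasDerivAt.matrix_mulVec_const {M : ℝ → Matrix m n ℝ} {M' : Matrix m n ℝ} {t : ℝ}
    (hM : HasDerivAt M M' t) (v : n → ℝ) : HasDerivAt (fun s => M s *ᵥ v) (M' *ᵥ v) t :=
  let L : Matrix m n ℝ →L[ℝ] m → ℝ := LinearMap.toContinuousLinearMap ((mulVecBilin ℝ ℝ).flip v)
  L.hasFDerivAt.comp_hasDerivAt t hM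

variable [DecidableEq n]

theorem hasDerivAt_exp_sub_smul_mulVec (A : Matrix n n ℝ) (c : ℝ) (v : n → ℝ) (t : ℝ) :
    HasDerivAt (fun s => NormedSpace.exp ((s - c) • A) *ᵥ v)
      (A *ᵥ (NormedSpace.exp ((t - c) • A) *ᵥ v)) t := by
  have hexp := (hasDerivAt_exp_smul_const' A (t - c)).scomp t ((hasDerivAt_id t).sub_const c)
  rw [one_smul] at hexp
  have hmulVec := hexp.matrix_mulVec_const v
  rwa [← mulVec_mulVec] at hmulVec

theorem hasDerivAt_sum_exp_sub_smul_mulVec {ι : Type*} (A : Matrix n n ℝ) (F : Finset ι)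
    (c : ι → ℝ) (w : ι → n → ℝ) (t : ℝ) :
    HasDerivAt (fun s => ∑ i ∈ F, NormedSpace.exp ((s - c i) • A) *ᵥ w i)
      (A *ᵥ ∑ i ∈ F, NormedSpace.exp ((t - c i) • A) *ᵥ w i) t := by
  rw [mulVec_sum]
  exact HasDerivAt.fun_sum fun i _ => hasDerivAt_exp_sub_smul_mulVec A (c i) (w i) t

end

theorem impulsiveTraj_hasDerivAt_general (ω : ℝ) (t_init : ℝ) (N : ℕ)
    (τ : Fin N → ℝ) (x_init : Fin 6 → ℝ) (V : Fin N → Fin 3 → ℝ) :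
    ∀ t : ℝ, (∀ i, t ≠ τ i) →
      HasDerivAt (impulsiveTraj ω t_init x_init τ V)
        ((cwhA ω).mulVec (impulsiveTraj ω t_init x_init τ V t)) t := by
  classical
  intro t ht
  set F := Finset.univ.filter fun i => τ i ≤ t
  set coast : ℝ → Fin 6 → ℝ := fun s =>
    expm ω (s - t_init) *ᵥ x_init + ∑ i ∈ F, expm ω (s - τ i) *ᵥ (cwhB *ᵥ V i)
  have hcoast : HasDerivAt coast (cwhA ω *ᵥ coast t) t := by
    rw [mulVec_add]
    exact (hasDerivAt_exp_sub_smul_mulVec _ _ _ t).add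
      (hasDerivAt_sum_exp_sub_smul_mulVec _ F τ (fun i => cwhB *ᵥ V i) t)
  have hx : impulsiveTraj ω t_init x_init τ V =ᶠ[𝓝 t] coast := by
    filter_upwards [eventually_all.2 fun i => eventually_le_iff_le_of_ne (ht i)] with s hs
    simp only [impulsiveTraj, hs]
    rfl
  rw [hx.eq_of_nhds]
  exact hcoast.congr_of_eventuallyEq hx

/-- **The impulsive solution satisfies the coasting dynamics away from burn times.**
At every time `t` that is not one of the burn times, the impulsive CWH trajectory is
differentiable with derivative `x′(t) = A x(t)`. -/
theorem impulsiveTraj_hasDerivAt (ω : ℝ) (hω : 0 < ω) (t_init : ℝ) (N : ℕ)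
    (τ : Fin N → ℝ) (hτ : Monotone τ) (x_init : Fin 6 → ℝ) (V : Fin N → Fin 3 → ℝ) :
    ∀ t : ℝ, (∀ i, t ≠ τ i) →
      HasDerivAt (impulsiveTraj ω t_init x_init τ V)
        ((cwhA ω).mulVec (impulsiveTraj ω t_init x_init τ V t)) t :=
  impulsiveTraj_hasDerivAt_general ω t_init N τ x_init V

end
end
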